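/- arXiv:1803.04328 — 2 statements merged into one kernel-verified Lean document; each statement's English description precedes it below -/
import Mathlib

section
/- Let Σ be a complete fan in Λ_ℝ associated to a root system Φ(Σ). Then the root lattice Λ_R and the weight lattice Λ_P of Φ(Σ) satisfy Λ_R ⊆ Λ ⊆ Λ_P. -/
open scoped RealInnerProductSpace

namespace FanRS

variable {V : Type*} [NormedAddCommGroup V] [InnerProductSpace ℝ V]

/-- The (orthogonal) reflection in the hyperplane orthogonal to `a`. -/
noncomputable def reflAt (a : V) : V → V :=
  fun v => v - (2 * ⟪v, a⟫ / ⟪a, a⟫) • a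

/-- The convex cone generated by a finite set `S`. -/
def coneOf (S : Finset V) : Set V :=
  {v | ∃ c : V → ℝ, (∀ x, 0 ≤ c x) ∧ v = ∑ x ∈ S, c x • x}

/-- A strictly convex rational polyhedral cone with respect to the lattice `Λ`. -/
def IsLatticeCone (Λ : AddSubgroup V) (σ : Set V) : Prop :=
  ∃ S : Finset V, (S : Set V) ⊆ (Λ : Set V) ∧ σ = coneOf S ∧ ∀ v ∈ σ, -v ∈ σ → v = 0

/-- `F` is a face of the convex cone `σ`. -/
def IsFace (σ F : Set V) : Prop :=
  F ⊆ σ ∧ Convex ℝ F ∧ ∀ x ∈ σ, ∀ y ∈ σ, x + y ∈ F → x ∈ F ∧ y ∈ F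

/-- A fan in `Λ_ℝ`: a finite collection of rational polyhedral strictly convex cones,
closed under intersections (which are common faces) and under taking faces. -/
structure IsFan (Λ : AddSubgroup V) (F : Set (Set V)) : Prop where
  finite : F.Finite
  isCone : ∀ σ ∈ F, IsLatticeCone Λ σ
  inter_mem : ∀ σ ∈ F, ∀ τ ∈ F, σ ∩ τ ∈ F ∧ IsFace σ (σ ∩ τ) ∧ IsFace τ (σ ∩ τ)
  face_mem : ∀ σ ∈ F, ∀ τ, IsFace σ τ → τ ∈ F

/-- A complete fan: the cones cover the ambient space. -/
def IsComplete (F : Set (Set V)) : Prop := ⋃₀ F = Set.univ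

/-- `Λ` is a (full) lattice in `V`. -/
def IsLattice (Λ : AddSubgroup V) : Prop :=
  ∃ (m : ℕ) (b : Module.Basis (Fin m) ℝ V), Λ = AddSubgroup.closure (Set.range ⇑b)

/-- Dimension of a cone. -/
noncomputable def dim (σ : Set V) : ℕ := Module.finrank ℝ (Submodule.span ℝ σ)

/-- The automorphism group of a fan: lattice automorphisms mapping cones to cones. -/
def Aut (Λ : AddSubgroup V) (F : Set (Set V)) : Set (V ≃ₗ[ℝ] V) :=
  {f | ⇑f '' (Λ : Set V) = (Λ : Set V) ∧ ∀ σ ∈ F, ⇑f '' σ ∈ F}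

/-- The ray generated by `v`. -/
def rayOf (v : V) : Set V := {x | ∃ c : ℝ, 0 ≤ c ∧ x = c • v}

/-- The set `Prim(Σ)` of primitive lattice generators of the rays of the fan `F`. -/
def PrimFan (Λ : AddSubgroup V) (F : Set (Set V)) : Set V :=
  {v | v ∈ Λ ∧ v ≠ 0 ∧ rayOf v ∈ F ∧ ∀ u ∈ Λ, u ∈ rayOf v → ∃ k : ℕ, u = k • v}

/-- Every automorphism of the fan is an isometry (for the chosen inner product). -/
def AutIsometric (Λ : AddSubgroup V) (F : Set (Set V)) : Prop :=
  ∀ f ∈ Aut Λ F, ∀ v : V, ‖f v‖ = ‖v‖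

/-- The fan `F` is associated to a root system: for every facet (codimension-one cone)
`σ`, there is a reflection fixing the hyperplane spanned by `σ` that is an automorphism
of the fan. -/
def AssociatedToRS (Λ : AddSubgroup V) (F : Set (Set V)) : Prop :=
  ∀ σ ∈ F, dim σ + 1 = Module.finrank ℝ V →
    ∃ s ∈ Aut Λ F, s ≠ 1 ∧ s * s = 1 ∧ ∀ v ∈ Submodule.span ℝ σ, s v = v

/-- `Φ(Σ)`: the set of primitive lattice vectors normal to the facet hyperplanes. -/
def Phi (Λ : AddSubgroup V) (F : Set (Set V)) : Set V :=
  {a | ∃ σ ∈ F, dim σ + 1 = Module.finrank ℝ V ∧ a ∈ Λ ∧ a ≠ 0 ∧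
    (∀ v ∈ σ, ⟪a, v⟫ = 0) ∧
    ∀ u ∈ Λ, (∀ v ∈ σ, ⟪u, v⟫ = 0) → ∃ k : ℤ, u = k • a}

/-- The Weyl group of `Φ(Σ)`: generated by the reflections `s_α`, `α ∈ Φ(Σ)`. -/
def WeylOf (Λ : AddSubgroup V) (F : Set (Set V)) : Subgroup (V ≃ₗ[ℝ] V) :=
  Subgroup.closure {g : V ≃ₗ[ℝ] V | ∃ a ∈ Phi Λ F, ∀ v, g v = reflAt a v}

/-- A (closed) Weyl chamber of a finite set of vectors `Φ`. -/
def IsWeylChamber (Φ : Set V) (E : Set V) : Prop :=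
  ∃ u : V, (∀ a ∈ Φ, ⟪u, a⟫ ≠ 0) ∧ E = {v | ∀ a ∈ Φ, 0 ≤ ⟪u, a⟫ * ⟪v, a⟫}

end FanRS

/-!
Fix a root `a ∈ Φ(Σ)` with facet `σ`. The reflection `s` provided by the root-system hypothesis
is an isometry fixing the hyperplane `span σ = aᗮ` pointwise and is not the identity, so it is the
orthogonal reflection `s_a`. As `s` preserves `Λ`, for `v ∈ Λ` the vector
`v - s_a v = (2⟪v, a⟫ / ⟪a, a⟫) • a` lies in `Λ` and is normal to `σ`; primitivity of `a` then
forces the coefficient to be an integer.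
-/

open Module Submodule

section Reflection

variable {V : Type*} [NormedAddCommGroup V] [InnerProductSpace ℝ V]

theorem Submodule.span_eq_orthogonal_singleton [FiniteDimensional ℝ V] {σ : Set V} {a : V}
    (ha : a ≠ 0) (hperp : ∀ v ∈ σ, ⟪a, v⟫ = 0)
    (hdim : finrank ℝ (span ℝ σ) + 1 = finrank ℝ V) : span ℝ σ = (ℝ ∙ a)ᗮ := by
  refine eq_of_le_of_finrank_eq ((span_le).2 fun v hv ↦
    mem_orthogonal_singleton_iff_inner_right.2 (hperp v hv)) ?_
  have hsum := finrank_add_finrank_orthogonal (ℝ ∙ a)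
  rw [finrank_span_singleton ha] at hsum
  omega

theorem LinearMap.apply_eq_of_fixes_orthogonal_singleton (f : V →ₗ[ℝ] V) {a : V} {t : ℝ}
    (hfix : ∀ x ∈ (ℝ ∙ a)ᗮ, f x = x) (ha : f a = t • a) (v : V) :
    f v = v + ((t - 1) * (⟪v, a⟫ / ⟪a, a⟫)) • a := by
  rcases eq_or_ne a 0 with rfl | ha0
  · simpa using hfix v (by simp)
  set c := ⟪v, a⟫ / ⟪a, a⟫
  have hperp : v - c • a ∈ (ℝ ∙ a)ᗮ := by
    rw [mem_orthogonal_singleton_iff_inner_left, inner_sub_left, real_inner_smul_left,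
      div_mul_cancel₀ _ (inner_self_ne_zero.2 ha0), sub_self]
  calc f v = f (v - c • a) + c • f a := by rw [← map_smul, ← map_add, sub_add_cancel]
    _ = v + ((t - 1) * c) • a := by rw [hfix _ hperp, ha]; module

theorem LinearIsometry.apply_mem_span_singleton_of_fixes_orthogonal (f : V →ₗᵢ[ℝ] V) {a : V}
    (hfix : ∀ x ∈ (ℝ ∙ a)ᗮ, f x = x) : f a ∈ ℝ ∙ a := by
  rw [← orthogonal_orthogonal (ℝ ∙ a), mem_orthogonal]
  intro x hx
  rw [← hfix x hx, f.inner_map_map, ← mem_orthogonal_singleton_iff_inner_left]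
  exact hx

theorem LinearIsometry.apply_eq_reflAt_of_fixes_orthogonal (f : V →ₗᵢ[ℝ] V) {a : V}
    (hfix : ∀ x ∈ (ℝ ∙ a)ᗮ, f x = x) (hf : f ≠ LinearIsometry.id) (v : V) :
    f v = FanRS.reflAt a v := by
  obtain ⟨t, ht⟩ := mem_span_singleton.1 (f.apply_mem_span_singleton_of_fixes_orthogonal hfix)
  have hform : ∀ v, f v = v + ((t - 1) * (⟪v, a⟫ / ⟪a, a⟫)) • a :=
    f.toLinearMap.apply_eq_of_fixes_orthogonal_singleton hfix ht.symm
  have ha0 : a ≠ 0 := by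
    rintro rfl
    exact hf (LinearIsometry.ext fun x ↦ hfix x (by simp))
  have habs : |t| = 1 := by
    have hnorm := f.norm_map a
    rw [← ht, norm_smul, Real.norm_eq_abs] at hnorm
    exact (mul_eq_right₀ (norm_ne_zero_iff.2 ha0)).1 hnorm
  rcases abs_eq (zero_le_one' ℝ) |>.1 habs with rfl | rfl
  · exact absurd (LinearIsometry.ext fun x ↦ by simpa using hform x) hf
  · rw [hform, FanRS.reflAt, mul_div_assoc]
    module

end Reflection

namespace FanRS

variable {V : Type*} [NormedAddCommGroup V] [InnerProductSpace ℝ V]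
  {Λ : AddSubgroup V} {F : Set (Set V)}

theorem Phi_subset : Phi Λ F ⊆ Λ := fun _ ⟨_, _, _, haΛ, _⟩ ↦ haΛ

theorem reflAt_mem [FiniteDimensional ℝ V] (hiso : AutIsometric Λ F)
    (hrs : AssociatedToRS Λ F) {a v : V} (ha : a ∈ Phi Λ F) (hv : v ∈ Λ) : reflAt a v ∈ Λ := by
  obtain ⟨σ, hσ, hdim, -, ha0, hperp, -⟩ := ha
  obtain ⟨s, hsAut, hs1, -, hfix⟩ := hrs σ hσ hdim
  let f : V →ₗᵢ[ℝ] V := { s.toLinearMap with norm_map' := hiso s hsAut }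
  have hspan := span_eq_orthogonal_singleton ha0 hperp hdim
  have hf : f ≠ LinearIsometry.id := fun h ↦ hs1 (LinearEquiv.ext fun x ↦ congrArg (· x) h)
  rw [← f.apply_eq_reflAt_of_fixes_orthogonal (fun x hx ↦ hfix x (hspan ▸ hx)) hf]
  change s v ∈ (Λ : Set V)
  exact hsAut.1 ▸ Set.mem_image_of_mem s hv

theorem exists_int_eq_of_smul_mem {a : V} (ha : a ∈ Phi Λ F) {c : ℝ} (hc : c • a ∈ Λ) :
    ∃ k : ℤ, c = k := by
  obtain ⟨σ, -, -, -, ha0, hperp, hprim⟩ := ha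
  obtain ⟨k, hk⟩ := hprim _ hc fun v hv ↦ by rw [real_inner_smul_left, hperp v hv, mul_zero]
  exact ⟨k, smul_left_injective ℝ ha0 (by simpa [← Int.cast_smul_eq_zsmul ℝ] using hk)⟩

end FanRS

theorem statement11_general {V : Type*} [NormedAddCommGroup V] [InnerProductSpace ℝ V]
    [FiniteDimensional ℝ V] (Λ : AddSubgroup V) (F : Set (Set V))
    (hiso : FanRS.AutIsometric Λ F) (hrs : FanRS.AssociatedToRS Λ F) :
    ((AddSubgroup.closure (FanRS.Phi Λ F) : AddSubgroup V) : Set V) ⊆ (Λ : Set V) ∧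
    (Λ : Set V) ⊆
      {v | ∀ a ∈ FanRS.Phi Λ F, ∃ k : ℤ, 2 * ⟪v, a⟫ / ⟪a, a⟫ = (k : ℝ)} := by
  refine ⟨(AddSubgroup.closure_le Λ).2 FanRS.Phi_subset, fun v hv a ha ↦ ?_⟩
  have hmem : (2 * ⟪v, a⟫ / ⟪a, a⟫) • a ∈ Λ := by
    simpa [FanRS.reflAt] using Λ.sub_mem hv (FanRS.reflAt_mem hiso hrs ha hv)
  exact FanRS.exists_int_eq_of_smul_mem ha hmem

/-- for a complete fan `Σ` associated to a root system `Φ(Σ)`, the root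
lattice `Λ_R` and the weight lattice `Λ_P` of `Φ(Σ)` satisfy `Λ_R ⊆ Λ ⊆ Λ_P`. -/
theorem statement11 {V : Type*} [NormedAddCommGroup V] [InnerProductSpace ℝ V]
    [FiniteDimensional ℝ V] (Λ : AddSubgroup V) (F : Set (Set V))
    (hΛ : FanRS.IsLattice Λ) (hF : FanRS.IsFan Λ F) (hc : FanRS.IsComplete F)
    (hiso : FanRS.AutIsometric Λ F) (hrs : FanRS.AssociatedToRS Λ F) :
    ((AddSubgroup.closure (FanRS.Phi Λ F) : AddSubgroup V) : Set V) ⊆ (Λ : Set V) ∧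
    (Λ : Set V) ⊆
      {v | ∀ a ∈ FanRS.Phi Λ F, ∃ k : ℤ, 2 * ⟪v, a⟫ / ⟪a, a⟫ = (k : ℝ)} :=
  statement11_general Λ F hiso hrs
end

section
/- Let Σ be a complete fan and suppose f ∈ Aut(Σ) is an isometry stabilizing a partial flag of cones {0} ⊊ τ_1 ⊊ ... ⊊ τ_r with τ_i ∈ Σ(i). Then f restricts to the identity on the linear span of τ_r. -/
open scoped RealInnerProductSpace

/-!
Induct along the flag, starting from the face `{0}`. Suppose `f` fixes `span τᵢ` pointwise and
preserves `span τᵢ₊₁`, which has one more dimension. Being an isometry, `f` acts by `±1` on the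
line `span τᵢ₊₁ ⊓ (span τᵢ)ᗮ`, so on `span τᵢ₊₁` it is either the identity or the reflection in
`span τᵢ`. The reflection cannot preserve `τᵢ₊₁`: for `v ∈ τᵢ₊₁` with mirror image `s v`, the
point `v + s v` lies in `τᵢ₊₁ ∩ span τᵢ = τᵢ`, and since `τᵢ` is a face of `τᵢ₊₁` this forces
`v ∈ τᵢ`, i.e. `τᵢ₊₁ ⊆ τᵢ`, contradicting the dimensions.
-/

open Module Submodule FanRS

section

variable {V : Type*} [NormedAddCommGroup V] [InnerProductSpace ℝ V]

namespace LinearIsometry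

theorem exists_eq_smul_of_finrank_eq_one (f : V →ₗᵢ[ℝ] V) {L : Submodule ℝ V}
    (hL : finrank ℝ L = 1) (hfL : Set.MapsTo f L L) :
    ∃ s : ℝ, (s = 1 ∨ s = -1) ∧ ∀ x ∈ L, f x = s • x := by
  obtain ⟨u, hu, hspan⟩ := finrank_eq_one_iff'.mp hL
  obtain ⟨s, hs⟩ := hspan ⟨f u, hfL u.2⟩
  have hfu : f u = s • (u : V) := by simpa using congrArg Subtype.val hs.symm
  have hnorm : |s| * ‖(u : V)‖ = 1 * ‖(u : V)‖ := by
    rw [one_mul, ← Real.norm_eq_abs, ← norm_smul, ← hfu, f.norm_map]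
  have hs1 : |s| = 1 := mul_right_cancel₀ (by simpa using hu) hnorm
  refine ⟨s, abs_eq zero_le_one |>.mp hs1, fun x hx => ?_⟩
  obtain ⟨t, ht⟩ := hspan ⟨x, hx⟩
  have hx' : x = t • (u : V) := by simpa using congrArg Subtype.val ht.symm
  rw [hx', f.map_smul, hfu, smul_comm]

theorem mapsTo_orthogonal (f : V →ₗᵢ[ℝ] V) {K : Submodule ℝ V} (hK : ∀ k ∈ K, f k = k) :
    Set.MapsTo f Kᗮ Kᗮ := fun x hx => by
  rw [SetLike.mem_coe, mem_orthogonal] at hx ⊢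
  intro k hk
  rw [← hK k hk, f.inner_map_map, hx k hk]

theorem eq_self_or_eq_reflection_of_finrank_eq_succ [FiniteDimensional ℝ V] (f : V →ₗᵢ[ℝ] V)
    {K W : Submodule ℝ V} (hKW : K ≤ W) (hdim : finrank ℝ W = finrank ℝ K + 1)
    (hW : Set.MapsTo f W W) (hK : ∀ k ∈ K, f k = k) :
    (∀ w ∈ W, f w = w) ∨ ∀ w ∈ W, f w = K.reflection w := by
  have hL : finrank ℝ ↥(Kᗮ ⊓ W) = 1 := finrank_add_inf_finrank_orthogonal' hKW hdim.symm
  obtain ⟨s, hs, hsL⟩ := f.exists_eq_smul_of_finrank_eq_one hL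
    fun x hx => ⟨f.mapsTo_orthogonal hK hx.1, hW hx.2⟩
  have hdecomp : ∀ w ∈ W, f w = K.starProjection w + s • (w - K.starProjection w) := by
    intro w hw
    have hPw : K.starProjection w ∈ K := K.starProjection_apply_mem w
    have hL : w - K.starProjection w ∈ Kᗮ ⊓ W :=
      ⟨K.sub_starProjection_mem_orthogonal w, W.sub_mem hw (hKW hPw)⟩
    conv_lhs => rw [← add_sub_cancel (K.starProjection w) w]
    rw [f.map_add, hK _ hPw, hsL _ hL]
  rcases hs with rfl | rfl
  · left
    intro w hw
    rw [hdecomp w hw, one_smul, add_sub_cancel]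
  · right
    intro w hw
    rw [hdecomp w hw, Submodule.reflection_apply, neg_one_smul, two_smul]
    abel

end LinearIsometry

namespace FanRS

variable {Λ : AddSubgroup V} {σ ρ : Set V}

theorem zero_mem_coneOf (S : Finset V) : (0 : V) ∈ coneOf S :=
  ⟨0, fun _ => le_rfl, by simp⟩

theorem add_mem_coneOf {S : Finset V} {x y : V} (hx : x ∈ coneOf S) (hy : y ∈ coneOf S) :
    x + y ∈ coneOf S := by
  obtain ⟨c, hc, rfl⟩ := hx
  obtain ⟨d, hd, rfl⟩ := hy
  exact ⟨c + d, fun x => add_nonneg (hc x) (hd x), by simp [add_smul, Finset.sum_add_distrib]⟩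

theorem smul_mem_coneOf {S : Finset V} {x : V} {t : ℝ} (ht : 0 ≤ t) (hx : x ∈ coneOf S) :
    t • x ∈ coneOf S := by
  obtain ⟨c, hc, rfl⟩ := hx
  exact ⟨t • c, fun x => mul_nonneg ht (hc x), by simp [Finset.smul_sum, mul_smul]⟩

namespace IsLatticeCone

theorem zero_mem (h : IsLatticeCone Λ σ) : (0 : V) ∈ σ := by
  obtain ⟨S, -, rfl, -⟩ := h
  exact zero_mem_coneOf S

theorem add_mem (h : IsLatticeCone Λ σ) {x y : V} (hx : x ∈ σ) (hy : y ∈ σ) : x + y ∈ σ := by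
  obtain ⟨S, -, rfl, -⟩ := h
  exact add_mem_coneOf hx hy

theorem smul_mem (h : IsLatticeCone Λ σ) {x : V} {t : ℝ} (ht : 0 ≤ t) (hx : x ∈ σ) :
    t • x ∈ σ := by
  obtain ⟨S, -, rfl, -⟩ := h
  exact smul_mem_coneOf ht hx

theorem exists_sub_of_mem_span (h : IsLatticeCone Λ σ) {x : V} (hx : x ∈ span ℝ σ) :
    ∃ a ∈ σ, ∃ b ∈ σ, x = a - b := by
  induction hx using Submodule.span_induction with
  | mem y hy => exact ⟨y, hy, 0, h.zero_mem, (sub_zero y).symm⟩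
  | zero => exact ⟨0, h.zero_mem, 0, h.zero_mem, (sub_zero 0).symm⟩
  | add y z _ _ hy hz =>
    obtain ⟨a, ha, b, hb, rfl⟩ := hy
    obtain ⟨a', ha', b', hb', rfl⟩ := hz
    exact ⟨a + a', h.add_mem ha ha', b + b', h.add_mem hb hb', by abel⟩
  | smul t y _ hy =>
    obtain ⟨a, ha, b, hb, rfl⟩ := hy
    rcases le_or_gt 0 t with ht | ht
    · exact ⟨t • a, h.smul_mem ht ha, t • b, h.smul_mem ht hb, smul_sub t a b⟩
    · refine ⟨(-t) • b, h.smul_mem (by linarith) hb, (-t) • a, h.smul_mem (by linarith) ha, ?_⟩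
      rw [smul_sub, neg_smul, neg_smul, neg_sub_neg]

theorem isFace_singleton_zero (h : IsLatticeCone Λ σ) : IsFace σ {0} := by
  obtain ⟨S, -, hS, hstrict⟩ := h
  refine ⟨Set.singleton_subset_iff.mpr (hS ▸ zero_mem_coneOf S), convex_singleton 0, ?_⟩
  intro x hx y hy hxy
  obtain rfl : y = -x := eq_neg_of_add_eq_zero_right hxy
  obtain rfl : x = 0 := hstrict x hx hy
  simp

end IsLatticeCone

namespace IsFace

theorem mem_of_mem_span (hface : IsFace σ ρ) (hρ : IsLatticeCone Λ ρ) {x : V} (hx : x ∈ σ)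
    (hxρ : x ∈ span ℝ ρ) : x ∈ ρ := by
  obtain ⟨a, ha, b, hb, rfl⟩ := hρ.exists_sub_of_mem_span hxρ
  exact (hface.2.2 _ hx b (hface.1 hb) (by rwa [sub_add_cancel])).1

theorem subset_of_mapsTo_reflection [FiniteDimensional ℝ V] (hface : IsFace σ ρ)
    (hσ : IsLatticeCone Λ σ) (hρ : IsLatticeCone Λ ρ)
    (hrefl : Set.MapsTo (span ℝ ρ).reflection σ σ) : σ ⊆ ρ := by
  intro v hv
  have hsum : v + (span ℝ ρ).reflection v = (2 : ℝ) • (span ℝ ρ).starProjection v := by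
    rw [Submodule.reflection_apply, two_smul, two_smul]
    abel
  have hsumρ : v + (span ℝ ρ).reflection v ∈ ρ := hface.mem_of_mem_span hρ
    (hσ.add_mem hv (hrefl hv)) (hsum ▸ (span ℝ ρ).smul_mem 2 (starProjection_apply_mem _ v))
  exact (hface.2.2 v hv _ (hrefl hv) hsumρ).1

theorem map_eq_self_of_mem_span [FiniteDimensional ℝ V] (hface : IsFace σ ρ)
    (hσ : IsLatticeCone Λ σ) (hρ : IsLatticeCone Λ ρ) (hdim : dim σ = dim ρ + 1)
    (f : V →ₗᵢ[ℝ] V) (hfρ : ∀ v ∈ span ℝ ρ, f v = v) (hfσ : Set.MapsTo f σ σ) :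
    ∀ v ∈ span ℝ σ, f v = v := by
  have hspan : span ℝ ρ ≤ span ℝ σ := span_mono hface.1
  have hmaps : Set.MapsTo f (span ℝ σ) (span ℝ σ) := mapsTo_span (f := f.toLinearMap) hfσ
  refine (f.eq_self_or_eq_reflection_of_finrank_eq_succ hspan hdim hmaps hfρ).resolve_right fun hrefl => ?_
  have hσρ : σ ⊆ ρ := hface.subset_of_mapsTo_reflection hσ hρ fun v hv =>
    hrefl v (subset_span hv) ▸ hfσ hv
  have := finrank_mono (span_mono (R := ℝ) hσρ)
  unfold dim at hdim
  omega

end IsFace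

theorem IsFan.isFace_of_subset {F : Set (Set V)} (hF : IsFan Λ F) (hσ : σ ∈ F) (hρ : ρ ∈ F)
    (hρσ : ρ ⊆ σ) : IsFace σ ρ := by
  simpa [Set.inter_eq_right.mpr hρσ] using (hF.inter_mem σ hσ ρ hρ).2.1

end FanRS

end

/-- if `f ∈ Aut(Σ)` is an isometry stabilizing a partial flag of cones
`{0} ⊊ τ_1 ⊊ ⋯ ⊊ τ_r` with `τ_i ∈ Σ(i)`, then `f` restricts to the identity on the
linear span of `τ_r`. -/
theorem statement17 {V : Type*} [NormedAddCommGroup V] [InnerProductSpace ℝ V]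
    [FiniteDimensional ℝ V] (Λ : AddSubgroup V) (F : Set (Set V))
    (hF : FanRS.IsFan Λ F)
    (f : V ≃ₗ[ℝ] V) (hiso : ∀ v : V, ‖f v‖ = ‖v‖)
    (r : ℕ) (hr : 0 < r) (τ : Fin r → Set V)
    (hmem : ∀ i, τ i ∈ F ∧ FanRS.dim (τ i) = (i : ℕ) + 1)
    (hchain : ∀ i j : Fin r, i < j → τ i ⊆ τ j ∧ τ i ≠ τ j)
    (hstab : ∀ i, ⇑f '' τ i = τ i) :
    ∀ v ∈ Submodule.span ℝ (τ ⟨r - 1, by omega⟩), f v = v := by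
  let g : V →ₗᵢ[ℝ] V := ⟨f.toLinearMap, hiso⟩
  have hg : ∀ i, Set.MapsTo g (τ i) (τ i) := fun i v hv => hstab i ▸ Set.mem_image_of_mem f hv
  have hcone : ∀ i, IsLatticeCone Λ (τ i) := fun i => hF.isCone _ (hmem i).1
  suffices ∀ i (hi : i < r), ∀ v ∈ span ℝ (τ ⟨i, hi⟩), f v = v from this _ _
  intro i
  induction i with
  | zero =>
    intro hi
    have hzero : IsFace (τ ⟨0, hi⟩) {0} := (hcone _).isFace_singleton_zero
    refine hzero.map_eq_self_of_mem_span (hcone _) (hF.isCone _ (hF.face_mem _ (hmem _).1 _ hzero))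
      ?_ g ?_ (hg _)
    · rw [(hmem _).2, dim, span_zero_singleton, finrank_bot]
    · simp
  | succ i ih =>
    intro hi
    have hle : (⟨i, by omega⟩ : Fin r) < ⟨i + 1, hi⟩ := Fin.mk_lt_mk.mpr i.lt_succ_self
    exact (hF.isFace_of_subset (hmem _).1 (hmem _).1 (hchain _ _ hle).1).map_eq_self_of_mem_span
      (hcone _) (hcone _) (by rw [(hmem _).2, (hmem _).2]) g (ih _) (hg _)
end
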